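/- For every (λ_1,…,λ_p) ∈ (0,∞)^p, min_{1≤j≤p} λ_j^{-1} ε_{I_j}(1) ≤ ε(λ_1,…,λ_p). -/

import Mathlib

open MeasureTheory ProbabilityTheory Real Filter Topology
open scoped ProbabilityTheory

noncomputable section

/-- Marginal Fréchet-type distribution function `F_i(t) = exp(-σ t^(-1/η))` for `t > 0`. -/
def margF (σ η t : ℝ) : ℝ := if 0 < t then Real.exp (-σ * t ^ (-1 / η)) else 0

/-- Joint distribution function of the random vector `X`. -/
def jointF {Ω : Type*} [MeasureSpace Ω] {d : ℕ} (X : Fin d → Ω → ℝ) (t : Fin d → ℝ) : ℝ :=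
  (ℙ {ω | ∀ i, X i ω ≤ t i}).toReal

/-- Exponent function `ℓ(t) = -ln F_X(t)`. -/
def expo {Ω : Type*} [MeasureSpace Ω] {d : ℕ} (X : Fin d → Ω → ℝ) (t : Fin d → ℝ) : ℝ :=
  -Real.log (jointF X t)

/-- Block maximum `M(I_j) = max_{i ∈ I_j} F_i(X_i)`, where `I_j = {i | B i = j}`. -/
def blockMax {Ω : Type*} [MeasureSpace Ω] {d p : ℕ} (B : Fin d → Fin p) (σ : Fin d → ℝ)
    (η : ℝ) (X : Fin d → Ω → ℝ) (j : Fin p) (ω : Ω) : ℝ :=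
  sSup ((fun i => margF (σ i) η (X i ω)) '' {i | B i = j})

/-- Extremal dependence function
`ε(λ₁,…,λ_p) = E(max_j M(I_j)^(λ_j)) / (1 - E(max_j M(I_j)^(λ_j)))`. -/
def epsFun {Ω : Type*} [MeasureSpace Ω] {d p : ℕ} (B : Fin d → Fin p) (σ : Fin d → ℝ)
    (η : ℝ) (X : Fin d → Ω → ℝ) (l : Fin p → ℝ) : ℝ :=
  (∫ ω, ⨆ j, blockMax B σ η X j ω ^ l j ∂ℙ) /
    (1 - ∫ ω, ⨆ j, blockMax B σ η X j ω ^ l j ∂ℙ)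

/-- Single-block extremal dependence function `ε_{I_j}(λ)`. -/
def epsBlock {Ω : Type*} [MeasureSpace Ω] {d p : ℕ} (B : Fin d → Fin p) (σ : Fin d → ℝ)
    (η : ℝ) (X : Fin d → Ω → ℝ) (j : Fin p) (l : ℝ) : ℝ :=
  (∫ ω, blockMax B σ η X j ω ^ l ∂ℙ) / (1 - ∫ ω, blockMax B σ η X j ω ^ l ∂ℙ)

/-!
For `m ∈ (0,∞)^p` and `u ∈ (0,1)`, the event `max_j M(I_j)^{m_j} ≤ u` is the event
`X ≤ (-log u)^{-η} (σ_i m_{B i})^η`, so by the homogeneity of `ℓ` it has probability `u^θ` with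
`θ = ℓ((σ_i m_{B i})^η)`. By the layer-cake formula
`E(max_j M(I_j)^{m_j}) = ∫₀¹ (1 - u^θ) du = θ/(θ+1)`, so `ε(m) = θ`; in particular `ε` is homogeneous
of order `-1`. For a block `j`, `M(I_j) ≤ max_k M(I_k)^{λ_k/λ_j}` and `x ↦ x/(1-x)` is increasing,
so `ε_{I_j}(1) ≤ ε(λ/λ_j) = λ_j ε(λ)`.
-/

theorem integral_eq_div_add_one_of_measureReal_le_eq_rpow {Ω : Type*} [MeasurableSpace Ω]
    {μ : Measure Ω} [IsProbabilityMeasure μ] {Y : Ω → ℝ} (hY : Measurable Y)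
    (hY01 : ∀ ω, Y ω ∈ Set.Icc 0 1) {θ : ℝ} (hθ : -1 < θ)
    (hcdf : ∀ u, 0 < u → u < 1 → μ.real {ω | Y ω ≤ u} = u ^ θ) :
    ∫ ω, Y ω ∂μ = θ / (θ + 1) := by
  have htail : Set.EqOn (fun t => μ.real {ω | t < Y ω})
      ((Set.Ioc 0 1).indicator fun t => 1 - t ^ θ) (Set.Ioi 0) := by
    intro t (ht : 0 < t)
    change μ.real {ω | t < Y ω} = _
    rcases lt_or_ge t 1 with h | h
    · rw [Set.indicator_of_mem (show t ∈ Set.Ioc 0 1 from ⟨ht, h.le⟩), ← hcdf t ht h,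
        ← probReal_compl_eq_one_sub (measurableSet_le hY measurable_const)]
      simp only [Set.compl_ofPred, not_le]
    · have hempty : {ω | t < Y ω} = ∅ :=
        Set.eq_empty_of_forall_notMem fun ω hω => (hY01 ω).2.not_gt (h.trans_lt hω)
      rw [hempty, measureReal_empty, Set.indicator_apply]
      split_ifs with h'
      · rw [le_antisymm h'.2 h, Real.one_rpow, sub_self]
      · rfl
  have hθ1 : θ + 1 ≠ 0 := by linarith
  rw [(Integrable.of_mem_Icc 0 1 hY.aemeasurable (ae_of_all _ hY01)).integral_eq_integral_meas_lt
      (ae_of_all _ fun ω => (hY01 ω).1),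
    setIntegral_congr_fun measurableSet_Ioi htail, setIntegral_indicator measurableSet_Ioc,
    Set.inter_eq_right.mpr Set.Ioc_subset_Ioi_self, ← intervalIntegral.integral_of_le zero_le_one,
    intervalIntegral.integral_sub intervalIntegrable_const
      (intervalIntegral.intervalIntegrable_rpow' hθ),
    intervalIntegral.integral_const, integral_rpow (Or.inl hθ), Real.one_rpow,
    Real.zero_rpow hθ1]
  field_simp
  ring

section margF

variable {σ η : ℝ}

lemma margF_nonneg (σ η t : ℝ) : 0 ≤ margF σ η t := by
  unfold margF
  split_ifs <;> positivity

lemma margF_le_one (hσ : 0 ≤ σ) (t : ℝ) : margF σ η t ≤ 1 := by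
  unfold margF
  split_ifs with ht
  · exact Real.exp_le_one_iff.mpr (by nlinarith [Real.rpow_nonneg ht.le (-1 / η)])
  · exact zero_le_one

lemma measurable_margF (σ η : ℝ) : Measurable (margF σ η) :=
  Measurable.ite measurableSet_Ioi (by fun_prop) measurable_const

lemma margF_le_iff (hσ : 0 < σ) (hη : 0 < η) {v : ℝ} (hv0 : 0 < v) (hv1 : v < 1) (t : ℝ) :
    margF σ η t ≤ v ↔ t ≤ (σ / -Real.log v) ^ η := by
  have hlog : 0 < -Real.log v := neg_pos.mpr (Real.log_neg hv0 hv1)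
  unfold margF
  split_ifs with ht
  · rw [← Real.le_log_iff_exp_le hv0, neg_mul, neg_le, ← div_le_iff₀' hσ,
      show -1 / η = (-η)⁻¹ by rw [inv_neg, neg_div, one_div],
      Real.le_rpow_inv_iff_of_neg (div_pos hlog hσ) ht (neg_lt_zero.mpr hη),
      Real.rpow_neg (div_pos hlog hσ).le, ← Real.inv_rpow (div_pos hlog hσ).le, inv_div]
  · exact iff_of_true hv0.le ((not_lt.mp ht).trans (by positivity))

lemma margF_rpow_le_iff (hσ : 0 < σ) (hη : 0 < η) {m u : ℝ} (hm : 0 < m) (hu0 : 0 < u)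
    (hu1 : u < 1) (t : ℝ) :
    margF σ η t ^ m ≤ u ↔ t ≤ (-Real.log u) ^ (-η) * (σ * m) ^ η := by
  have hlog : 0 < -Real.log u := neg_pos.mpr (Real.log_neg hu0 hu1)
  rw [← Real.le_rpow_inv_iff_of_pos (margF_nonneg σ η t) hu0.le hm,
    margF_le_iff hσ hη (Real.rpow_pos_of_pos hu0 _) (Real.rpow_lt_one hu0.le hu1 (inv_pos.mpr hm)),
    Real.log_rpow hu0, show σ / -(m⁻¹ * Real.log u) = (-Real.log u)⁻¹ * (σ * m) by field_simp,
    Real.mul_rpow (inv_nonneg.mpr hlog.le) (by positivity), Real.inv_rpow hlog.le,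
    Real.rpow_neg hlog.le]

end margF

section blockMax

variable {Ω : Type*} [MeasureSpace Ω] {d p : ℕ} {B : Fin d → Fin p} {σ : Fin d → ℝ} {η : ℝ}
  {X : Fin d → Ω → ℝ}

lemma blockMax_eq_iSup (j : Fin p) (ω : Ω) :
    blockMax B σ η X j ω = ⨆ i : {i // B i = j}, margF (σ i) η (X i ω) :=
  sSup_image'

lemma blockMax_nonneg (j : Fin p) (ω : Ω) : 0 ≤ blockMax B σ η X j ω := by
  rw [blockMax_eq_iSup]
  exact Real.iSup_nonneg fun i => margF_nonneg _ _ _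

lemma blockMax_le_iff {v : ℝ} (hv : 0 ≤ v) (j : Fin p) (ω : Ω) :
    blockMax B σ η X j ω ≤ v ↔ ∀ i, B i = j → margF (σ i) η (X i ω) ≤ v := by
  rw [blockMax_eq_iSup]
  exact ⟨fun h i hi => (le_ciSup (Set.finite_range _).bddAbove ⟨i, hi⟩).trans h,
    fun h => Real.iSup_le (fun i => h i i.2) hv⟩

lemma blockMax_le_one (hσ : ∀ i, 0 ≤ σ i) (j : Fin p) (ω : Ω) : blockMax B σ η X j ω ≤ 1 :=
  (blockMax_le_iff zero_le_one j ω).mpr fun i _ => margF_le_one (hσ i) _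

lemma measurable_blockMax (hX : ∀ i, Measurable (X i)) (j : Fin p) :
    Measurable (blockMax B σ η X j) := by
  rw [show blockMax B σ η X j = _ from funext (blockMax_eq_iSup j)]
  exact Measurable.iSup fun i => (measurable_margF _ _).comp (hX i)

lemma iSup_blockMax_rpow_mem_Icc (hσ : ∀ i, 0 ≤ σ i) {m : Fin p → ℝ} (hm : ∀ j, 0 ≤ m j)
    (ω : Ω) : ⨆ j, blockMax B σ η X j ω ^ m j ∈ Set.Icc 0 1 :=
  ⟨Real.iSup_nonneg fun j => Real.rpow_nonneg (blockMax_nonneg j ω) _,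
    Real.iSup_le (fun j => Real.rpow_le_one (blockMax_nonneg j ω) (blockMax_le_one hσ j ω) (hm j))
      zero_le_one⟩

lemma measurable_iSup_blockMax_rpow (hX : ∀ i, Measurable (X i)) (m : Fin p → ℝ) :
    Measurable fun ω => ⨆ j, blockMax B σ η X j ω ^ m j :=
  Measurable.iSup fun j => (measurable_blockMax hX j).pow_const _

lemma iSup_blockMax_rpow_le_iff {m : Fin p → ℝ} (hm : ∀ j, 0 < m j) {u : ℝ} (hu : 0 ≤ u)
    (ω : Ω) :
    ⨆ j, blockMax B σ η X j ω ^ m j ≤ u ↔ ∀ i, margF (σ i) η (X i ω) ^ m (B i) ≤ u := by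
  have hpow : ∀ j, ∀ x, 0 ≤ x → (x ^ m j ≤ u ↔ x ≤ u ^ (m j)⁻¹) := fun j x hx =>
    (Real.le_rpow_inv_iff_of_pos hx hu (hm j)).symm
  constructor
  · intro h i
    have hblock := (le_ciSup (Set.finite_range _).bddAbove (B i)).trans h
    rw [hpow _ _ (blockMax_nonneg _ _), blockMax_le_iff (Real.rpow_nonneg hu _)] at hblock
    exact (hpow _ _ (margF_nonneg _ _ _)).mpr (hblock i rfl)
  · intro h
    refine Real.iSup_le (fun j => ?_) hu
    rw [hpow _ _ (blockMax_nonneg _ _), blockMax_le_iff (Real.rpow_nonneg hu _)]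
    rintro i rfl
    exact (hpow _ _ (margF_nonneg _ _ _)).mp (h i)

lemma setOf_iSup_blockMax_rpow_le (hσ : ∀ i, 0 < σ i) (hη : 0 < η) {m : Fin p → ℝ}
    (hm : ∀ j, 0 < m j) {u : ℝ} (hu0 : 0 < u) (hu1 : u < 1) :
    {ω | ⨆ j, blockMax B σ η X j ω ^ m j ≤ u} =
      {ω | ∀ i, X i ω ≤ (-Real.log u) ^ (-η) * (σ i * m (B i)) ^ η} := by
  ext ω
  simp only [Set.mem_ofPred_eq, iSup_blockMax_rpow_le_iff hm hu0.le,
    margF_rpow_le_iff (hσ _) hη (hm _) hu0 hu1]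

lemma measureReal_iSup_blockMax_rpow_le (hσ : ∀ i, 0 < σ i) (hη : 0 < η)
    (hpos : ∀ t : Fin d → ℝ, (∀ i, 0 < t i) → 0 < jointF X t)
    (hhom : ∀ c : ℝ, 0 < c → ∀ t : Fin d → ℝ, (∀ i, 0 < t i) →
      expo X (fun i => c * t i) = c ^ (-1 / η) * expo X t)
    {m : Fin p → ℝ} (hm : ∀ j, 0 < m j) {u : ℝ} (hu0 : 0 < u) (hu1 : u < 1) :
    (ℙ : Measure Ω).real {ω | ⨆ j, blockMax B σ η X j ω ^ m j ≤ u} =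
      u ^ expo X (fun i => (σ i * m (B i)) ^ η) := by
  set a : Fin d → ℝ := fun i => (σ i * m (B i)) ^ η
  set c := (-Real.log u) ^ (-η)
  have hlog : 0 < -Real.log u := neg_pos.mpr (Real.log_neg hu0 hu1)
  have ha : ∀ i, 0 < a i := fun i => Real.rpow_pos_of_pos (mul_pos (hσ i) (hm _)) _
  have hc : 0 < c := Real.rpow_pos_of_pos hlog _
  have hexpo : expo X (fun i => c * a i) = -Real.log u * expo X a := by
    rw [hhom c hc a ha, ← Real.rpow_mul hlog.le, show -η * (-1 / η) = 1 by field_simp,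
      Real.rpow_one]
  rw [setOf_iSup_blockMax_rpow_le hσ hη hm hu0 hu1]
  calc _ = jointF X (fun i => c * a i) := rfl
    _ = Real.exp (-expo X (fun i => c * a i)) := by
      rw [expo, neg_neg, Real.exp_log (hpos _ fun i => mul_pos hc (ha i))]
    _ = u ^ expo X a := by
      rw [hexpo, Real.rpow_def_of_pos hu0]
      ring_nf

end blockMax

lemma expo_nonneg {Ω : Type*} [MeasureSpace Ω] [IsProbabilityMeasure (ℙ : Measure Ω)] {d : ℕ}
    (X : Fin d → Ω → ℝ) (t : Fin d → ℝ) : 0 ≤ expo X t :=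
  neg_nonneg.mpr (Real.log_nonpos ENNReal.toReal_nonneg measureReal_le_one)

section extremalDependence

variable {Ω : Type*} [MeasureSpace Ω] [IsProbabilityMeasure (ℙ : Measure Ω)] {d p : ℕ}
  {X : Fin d → Ω → ℝ} {σ : Fin d → ℝ} {η : ℝ} {B : Fin d → Fin p}

lemma integral_iSup_blockMax_rpow (hX : ∀ i, Measurable (X i)) (hσ : ∀ i, 0 < σ i)
    (hη : 0 < η) (hpos : ∀ t : Fin d → ℝ, (∀ i, 0 < t i) → 0 < jointF X t)
    (hhom : ∀ c : ℝ, 0 < c → ∀ t : Fin d → ℝ, (∀ i, 0 < t i) →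
      expo X (fun i => c * t i) = c ^ (-1 / η) * expo X t)
    {m : Fin p → ℝ} (hm : ∀ j, 0 < m j) :
    ∫ ω, ⨆ j, blockMax B σ η X j ω ^ m j ∂ℙ =
      expo X (fun i => (σ i * m (B i)) ^ η) / (expo X (fun i => (σ i * m (B i)) ^ η) + 1) :=
  integral_eq_div_add_one_of_measureReal_le_eq_rpow (measurable_iSup_blockMax_rpow hX m)
    (iSup_blockMax_rpow_mem_Icc (fun i => (hσ i).le) fun j => (hm j).le)
    (by linarith [expo_nonneg X fun i => (σ i * m (B i)) ^ η])
    fun _ hu0 hu1 => measureReal_iSup_blockMax_rpow_le hσ hη hpos hhom hm hu0 hu1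

lemma epsFun_eq_expo (hX : ∀ i, Measurable (X i)) (hσ : ∀ i, 0 < σ i)
    (hη : 0 < η) (hpos : ∀ t : Fin d → ℝ, (∀ i, 0 < t i) → 0 < jointF X t)
    (hhom : ∀ c : ℝ, 0 < c → ∀ t : Fin d → ℝ, (∀ i, 0 < t i) →
      expo X (fun i => c * t i) = c ^ (-1 / η) * expo X t)
    {m : Fin p → ℝ} (hm : ∀ j, 0 < m j) :
    epsFun B σ η X m = expo X (fun i => (σ i * m (B i)) ^ η) := by
  have hθ := expo_nonneg X fun i => (σ i * m (B i)) ^ η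
  rw [epsFun, integral_iSup_blockMax_rpow hX hσ hη hpos hhom hm]
  field_simp
  ring

lemma epsFun_div_const (hX : ∀ i, Measurable (X i)) (hσ : ∀ i, 0 < σ i)
    (hη : 0 < η) (hpos : ∀ t : Fin d → ℝ, (∀ i, 0 < t i) → 0 < jointF X t)
    (hhom : ∀ c : ℝ, 0 < c → ∀ t : Fin d → ℝ, (∀ i, 0 < t i) →
      expo X (fun i => c * t i) = c ^ (-1 / η) * expo X t)
    {l : Fin p → ℝ} (hl : ∀ j, 0 < l j) {c : ℝ} (hc : 0 < c) :
    epsFun B σ η X (fun j => l j / c) = c * epsFun B σ η X l := by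
  have hσl : ∀ i, 0 < σ i * l (B i) := fun i => mul_pos (hσ i) (hl _)
  rw [epsFun_eq_expo hX hσ hη hpos hhom fun j => div_pos (hl j) hc,
    epsFun_eq_expo hX hσ hη hpos hhom hl]
  conv_rhs =>
    rw [show c = (c ^ (-η)) ^ (-1 / η) by
      rw [← Real.rpow_mul hc.le, show -η * (-1 / η) = 1 by field_simp, Real.rpow_one]]
  rw [← hhom _ (Real.rpow_pos_of_pos hc _) _ fun i => Real.rpow_pos_of_pos (hσl i) _]
  congr 1
  funext i
  rw [mul_div_assoc', Real.div_rpow (hσl i).le hc.le, Real.rpow_neg hc.le, div_eq_inv_mul]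

lemma epsBlock_le_epsFun (hX : ∀ i, Measurable (X i)) (hσ : ∀ i, 0 < σ i)
    (hη : 0 < η) (hpos : ∀ t : Fin d → ℝ, (∀ i, 0 < t i) → 0 < jointF X t)
    (hhom : ∀ c : ℝ, 0 < c → ∀ t : Fin d → ℝ, (∀ i, 0 < t i) →
      expo X (fun i => c * t i) = c ^ (-1 / η) * expo X t)
    {m : Fin p → ℝ} (hm : ∀ j, 0 < m j) {j : Fin p} (hj : m j = 1) :
    epsBlock B σ η X j 1 ≤ epsFun B σ η X m := by
  have hσ0 : ∀ i, 0 ≤ σ i := fun i => (hσ i).le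
  have hθ := expo_nonneg X fun i => (σ i * m (B i)) ^ η
  have hblock : Integrable (fun ω => blockMax B σ η X j ω ^ (1 : ℝ)) ℙ :=
    Integrable.of_mem_Icc 0 1 ((measurable_blockMax hX j).pow_const _).aemeasurable
      (ae_of_all _ fun ω => by
        rw [Real.rpow_one]
        exact ⟨blockMax_nonneg j ω, blockMax_le_one hσ0 j ω⟩)
  have hmax : Integrable (fun ω => ⨆ k, blockMax B σ η X k ω ^ m k) ℙ :=
    Integrable.of_mem_Icc 0 1 (measurable_iSup_blockMax_rpow hX m).aemeasurable
      (ae_of_all _ (iSup_blockMax_rpow_mem_Icc hσ0 fun k => (hm k).le))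
  have hle : ∫ ω, blockMax B σ η X j ω ^ (1 : ℝ) ∂ℙ ≤
      ∫ ω, ⨆ k, blockMax B σ η X k ω ^ m k ∂ℙ :=
    integral_mono hblock hmax fun ω => by
      simpa only [hj] using
        le_ciSup (f := fun k => blockMax B σ η X k ω ^ m k) (Set.finite_range _).bddAbove j
  have hlt : ∫ ω, ⨆ k, blockMax B σ η X k ω ^ m k ∂ℙ < 1 := by
    rw [integral_iSup_blockMax_rpow hX hσ hη hpos hhom hm, div_lt_one (by linarith)]
    linarith
  rw [epsBlock, epsFun, div_le_div_iff₀ (by linarith) (by linarith)]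
  nlinarith

end extremalDependence

theorem statement5_general
    {Ω : Type*} [MeasureSpace Ω] [IsProbabilityMeasure (ℙ : Measure Ω)]
    {d p : ℕ}
    (X : Fin d → Ω → ℝ) (hX : ∀ i, Measurable (X i))
    (σ : Fin d → ℝ) (hσ : ∀ i, 0 < σ i)
    (η : ℝ) (hη0 : 0 < η)
    (hpos : ∀ t : Fin d → ℝ, (∀ i, 0 < t i) → 0 < jointF X t)
    (hhom : ∀ c : ℝ, 0 < c → ∀ t : Fin d → ℝ, (∀ i, 0 < t i) →
      expo X (fun i => c * t i) = c ^ (-1 / η) * expo X t)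
    (B : Fin d → Fin p)
    (l : Fin p → ℝ) (hl : ∀ j, 0 < l j) :
    (⨅ j, (l j)⁻¹ * epsBlock B σ η X j 1) ≤ epsFun B σ η X l := by
  -- with no blocks, both sides are the junk value `0` of an empty `⨅` / `⨆`
  rcases isEmpty_or_nonempty (Fin p) with hp | ⟨⟨j⟩⟩
  · simp [Real.iInf_of_isEmpty, epsFun, Real.iSup_of_isEmpty]
  refine (ciInf_le (Set.finite_range _).bddBelow j).trans ?_
  calc (l j)⁻¹ * epsBlock B σ η X j 1
      ≤ (l j)⁻¹ * epsFun B σ η X (fun k => l k / l j) := by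
        refine mul_le_mul_of_nonneg_left ?_ (inv_nonneg.mpr (hl j).le)
        exact epsBlock_le_epsFun hX hσ hη0 hpos hhom (fun k => div_pos (hl k) (hl j))
          (div_self (hl j).ne')
    _ = epsFun B σ η X l := by
      rw [epsFun_div_const hX hσ hη0 hpos hhom hl (hl j), inv_mul_cancel_left₀ (hl j).ne']

theorem statement5
    {Ω : Type*} [MeasureSpace Ω] [IsProbabilityMeasure (ℙ : Measure Ω)]
    {d p : ℕ} (hd : 0 < d) (hp : 0 < p)
    (X : Fin d → Ω → ℝ) (hX : ∀ i, Measurable (X i))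
    (σ : Fin d → ℝ) (hσ : ∀ i, 0 < σ i)
    (η : ℝ) (hη0 : 0 < η) (hη1 : η ≤ 1)
    (hmarg : ∀ i, ∀ t : ℝ, 0 < t →
      ℙ {ω | X i ω ≤ t} = ENNReal.ofReal (Real.exp (-σ i * t ^ (-1 / η))))
    (hpos : ∀ t : Fin d → ℝ, (∀ i, 0 < t i) → 0 < jointF X t)
    (hhom : ∀ c : ℝ, 0 < c → ∀ t : Fin d → ℝ, (∀ i, 0 < t i) →
      expo X (fun i => c * t i) = c ^ (-1 / η) * expo X t)
    (B : Fin d → Fin p) (hB : Function.Surjective B)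
    (l : Fin p → ℝ) (hl : ∀ j, 0 < l j) :
    (⨅ j, (l j)⁻¹ * epsBlock B σ η X j 1) ≤ epsFun B σ η X l :=
  statement5_general X hX σ hσ η hη0 hpos hhom B l hl
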